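/- Let x_0, x_1, …, x_n ∈ ℝ^d with n ≥ 1, let β, r > 0, and let N_β = |{(i,j) : 1 ≤ i < j ≤ n, ‖x_i − x_j‖₂ ≤ βr}|. Suppose the finite set {x_0, x_1, …, x_n} (with the Euclidean metric) has doubling dimension at most d_0 + 1, i.e., every subset Y of it can be covered by at most 2^{d_0+1} subsets each of diameter at most half the diameter of Y. Then max_{1≤i≤n} ‖x_i − x_0‖₂ ≥ (1/4) · ((n² / (2N_β + 2n))^{1/(d_0+1)} − 1) · βr. -/

import Mathlib

/-! Let `M` be the largest distance from `x₀`, so `{x₀, …, xₙ}` has diameter at most `2M`.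
Iterating the doubling property `k` times covers it by `2^{(d₀+1)k}` pieces of diameter at most
`2M / 2^k`; for the least `k` with `2M ≤ 2^k βr` the pieces have diameter at most `βr`, and
`(2^k - 1) βr ≤ 4M`. Two points in a common piece form a near pair, so at most `2N_β + n` ordered
pairs share a piece, while by Cauchy–Schwarz at least `n² / 2^{(d₀+1)k}` do. Hence
`n² / (2N_β + 2n) ≤ 2^{(d₀+1)k}`, and taking `(d₀+1)`-th roots gives the bound. -/

open Finset Metric

theorem exists_le_two_pow_mul_and_two_pow_sub_one_mul_le {D c : ℝ} (hD : 0 ≤ D) (hc : 0 < c) :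
    ∃ k : ℕ, D ≤ 2 ^ k * c ∧ (2 ^ k - 1) * c ≤ 2 * D := by
  have hex : ∃ k : ℕ, D ≤ 2 ^ k * c := by
    obtain ⟨k, hk⟩ := pow_unbounded_of_one_lt (D / c) one_lt_two
    exact ⟨k, ((div_lt_iff₀ hc).mp hk).le⟩
  refine ⟨Nat.find hex, Nat.find_spec hex, ?_⟩
  cases hk : Nat.find hex with
  | zero => simpa using hD
  | succ k =>
    have hlt : 2 ^ k * c < D := not_le.mp (Nat.find_min hex (by omega))
    rw [pow_succ]
    nlinarith

theorem exists_finset_cover_ediam_le_div_two_pow {α : Type*} [PseudoEMetricSpace α]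
    {S : Set α} {m : ℕ}
    (hS : ∀ Y ⊆ S, ∃ f : Fin m → Set α, Y ⊆ ⋃ i, f i ∧ ∀ i, ediam (f i) ≤ ediam Y / 2)
    (k : ℕ) :
    ∃ 𝒞 : Finset (Set α), #𝒞 ≤ m ^ k ∧ S ⊆ ⋃₀ ↑𝒞 ∧ ∀ P ∈ 𝒞, ediam P ≤ ediam S / 2 ^ k := by
  classical
  induction k with
  | zero => exact ⟨{S}, by simp, by simp, by simp⟩
  | succ k ih =>
    obtain ⟨𝒞, hcard, hcov, hdiam⟩ := ih
    choose g hgcov hgdiam using fun P : Set α => hS (P ∩ S) Set.inter_subset_right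
    refine ⟨𝒞.biUnion fun P => univ.image (g P), ?_, ?_, ?_⟩
    · calc #(𝒞.biUnion fun P => univ.image (g P)) ≤ ∑ P ∈ 𝒞, #(univ.image (g P)) :=
            card_biUnion_le
        _ ≤ ∑ _P ∈ 𝒞, m := sum_le_sum fun P _ => card_image_le.trans (by simp)
        _ ≤ m ^ (k + 1) := by rw [sum_const, smul_eq_mul, pow_succ]; gcongr
    · intro y hy
      obtain ⟨P, hP, hyP⟩ := Set.mem_sUnion.mp (hcov hy)
      obtain ⟨i, hi⟩ := Set.mem_iUnion.mp (hgcov P ⟨hyP, hy⟩)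
      exact Set.mem_sUnion.mpr ⟨g P i, by simpa using ⟨P, hP, i, rfl⟩, hi⟩
    · simp only [mem_biUnion, mem_image, mem_univ, true_and]
      rintro _ ⟨P, hP, i, rfl⟩
      calc ediam (g P i) ≤ ediam (P ∩ S) / 2 := hgdiam P i
        _ ≤ ediam S / 2 ^ k / 2 :=
            ENNReal.div_le_div_right ((ediam_mono Set.inter_subset_left).trans (hdiam P hP)) 2
        _ = ediam S / 2 ^ (k + 1) := by
            rw [div_eq_mul_inv, div_eq_mul_inv, div_eq_mul_inv, pow_succ,
              ENNReal.mul_inv (by simp) (by simp), mul_assoc]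

theorem exists_finset_cover_ediam_le_of_subset_closedBall {α : Type*} [PseudoMetricSpace α]
    {S : Set α} {m : ℕ}
    (hS : ∀ Y ⊆ S, ∃ f : Fin m → Set α, Y ⊆ ⋃ i, f i ∧ ∀ i, ediam (f i) ≤ ediam Y / 2)
    {x₀ : α} {M δ : ℝ} (hM : 0 ≤ M) (hδ : 0 < δ) (hSM : S ⊆ closedBall x₀ M) :
    ∃ k : ℕ, (2 ^ k - 1) * δ ≤ 4 * M ∧
      ∃ 𝒞 : Finset (Set α), #𝒞 ≤ m ^ k ∧ S ⊆ ⋃₀ ↑𝒞 ∧ ∀ P ∈ 𝒞, ediam P ≤ ENNReal.ofReal δ := by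
  obtain ⟨k, hk_cover, hk_min⟩ :=
    exists_le_two_pow_mul_and_two_pow_sub_one_mul_le (by linarith : 0 ≤ 2 * M) hδ
  refine ⟨k, by linarith, ?_⟩
  obtain ⟨𝒞, h𝒞card, h𝒞cov, h𝒞diam⟩ := exists_finset_cover_ediam_le_div_two_pow hS k
  refine ⟨𝒞, h𝒞card, h𝒞cov, fun P hP => (h𝒞diam P hP).trans (ENNReal.div_le_of_le_mul ?_)⟩
  calc ediam S ≤ ENNReal.ofReal (2 * M) :=
        (ediam_mono hSM).trans <| ediam_le_of_forall_dist_le fun y hy z hz => by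
          linarith [dist_triangle_right y z x₀, mem_closedBall.mp hy, mem_closedBall.mp hz]
    _ ≤ ENNReal.ofReal δ * 2 ^ k := by
        rw [← ENNReal.ofReal_ofNat 2, ← ENNReal.ofReal_pow zero_le_two, ← ENNReal.ofReal_mul hδ.le]
        exact ENNReal.ofReal_le_ofReal (by linarith)

theorem card_sq_le_card_mul_card_filter_apply_eq {ι κ : Type*} [Fintype ι] [Fintype κ]
    [DecidableEq κ] (p : ι → κ) :
    Fintype.card ι ^ 2 ≤ Fintype.card κ * #{ij : ι × ι | p ij.1 = p ij.2} := by
  have hsum : Fintype.card ι = ∑ c, #{i | p i = c} := by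
    rw [← card_univ, card_eq_sum_card_fiberwise fun i _ => mem_univ (p i)]
  have hpairs : #{ij : ι × ι | p ij.1 = p ij.2} = ∑ c, #{i | p i = c} ^ 2 := by
    rw [card_eq_sum_card_fiberwise (f := fun ij => p ij.1) fun ij _ => mem_univ _]
    refine sum_congr rfl fun c _ => ?_
    rw [filter_filter, sq, ← card_product, ← filter_product, univ_product_univ]
    congr 1
    refine filter_congr fun ij _ => ?_
    constructor
    · rintro ⟨h, rfl⟩; exact ⟨rfl, h.symm⟩
    · rintro ⟨h1, h2⟩; exact ⟨h1.trans h2.symm, h1⟩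
  rw [hsum, hpairs]
  exact sq_sum_le_card_mul_sum_sq

theorem card_filter_le_two_mul_card_filter_lt_add_card {ι : Type*} [Fintype ι] [LinearOrder ι]
    (R : ι → ι → Prop) [DecidableRel R] (hR : ∀ i j, R i j → R j i) :
    #{ij : ι × ι | R ij.1 ij.2} ≤
      2 * #{ij : ι × ι | ij.1 < ij.2 ∧ R ij.1 ij.2} + Fintype.card ι := by
  set L := ({ij : ι × ι | ij.1 < ij.2 ∧ R ij.1 ij.2} : Finset (ι × ι))
  have hsub : ({ij : ι × ι | R ij.1 ij.2} : Finset (ι × ι)) ⊆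
      L ∪ L.image Prod.swap ∪ (univ : Finset ι).diag := by
    rintro ⟨i, j⟩ hij
    simp only [mem_filter, mem_univ, true_and] at hij
    rcases lt_trichotomy i j with h | rfl | h
    · simp [L, h, hij]
    · simp
    · simp [L, h, hR _ _ hij]
  calc _ ≤ #(L ∪ L.image Prod.swap ∪ (univ : Finset ι).diag) := card_le_card hsub
    _ ≤ #L + #(L.image Prod.swap) + #(univ : Finset ι).diag :=
        (card_union_le _ _).trans (Nat.add_le_add_right (card_union_le _ _) _)
    _ ≤ 2 * #L + Fintype.card ι := by
        rw [diag_card, card_univ]; have := card_image_le (s := L) (f := Prod.swap); omega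

theorem card_sq_le_card_mul_card_near_pairs {ι α : Type*} [Fintype ι] [LinearOrder ι]
    [PseudoMetricSpace α] (x : ι → α) (𝒞 : Finset (Set α)) {δ : ℝ} (hδ : 0 ≤ δ)
    (hcov : Set.range x ⊆ ⋃₀ ↑𝒞) (hdiam : ∀ P ∈ 𝒞, ediam P ≤ ENNReal.ofReal δ) :
    Fintype.card ι ^ 2 ≤
      #𝒞 * (2 * #{ij : ι × ι | ij.1 < ij.2 ∧ dist (x ij.1) (x ij.2) ≤ δ} + Fintype.card ι) := by
  classical
  have hpiece : ∀ i, ∃ P : 𝒞, x i ∈ (P : Set α) := fun i => by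
    obtain ⟨P, hP, hxP⟩ := Set.mem_sUnion.mp (hcov ⟨i, rfl⟩)
    exact ⟨⟨P, hP⟩, hxP⟩
  choose p hp using hpiece
  have hnear : ∀ i j, p i = p j → dist (x i) (x j) ≤ δ := fun i j hij =>
    (edist_le_ofReal hδ).mp <| edist_le_of_ediam_le (hp i) (hij ▸ hp j) (hdiam _ (p i).2)
  calc Fintype.card ι ^ 2 ≤ Fintype.card 𝒞 * #{ij : ι × ι | p ij.1 = p ij.2} :=
        card_sq_le_card_mul_card_filter_apply_eq p
    _ ≤ #𝒞 * #{ij : ι × ι | dist (x ij.1) (x ij.2) ≤ δ} := by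
        rw [Fintype.card_coe]
        exact Nat.mul_le_mul_left _ <| card_le_card fun ij hij => by
          simp only [mem_filter, mem_univ, true_and] at hij ⊢
          exact hnear _ _ hij
    _ ≤ _ := Nat.mul_le_mul_left _ <|
        card_filter_le_two_mul_card_filter_lt_add_card (fun i j => dist (x i) (x j) ≤ δ)
          fun i j h => by rwa [dist_comm]

/-- Lemma 6: if `{x₀, x₁, …, xₙ}` has doubling dimension at most `d₀ + 1` and `N_β`
is the number of `βr`-near pairs among `x₁, …, xₙ`, then
`max_i ‖x_i − x₀‖₂ ≥ (1/4)·((n²/(2N_β + 2n))^{1/(d₀+1)} − 1)·βr`. -/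
theorem doubling_max_dist_lower_bound {d n : ℕ} (hn : 0 < n)
    (x₀ : EuclideanSpace ℝ (Fin d)) (x : Fin n → EuclideanSpace ℝ (Fin d))
    (β r : ℝ) (hβ : 0 < β) (hr : 0 < r) (d₀ : ℕ)
    (hdbl : ∀ Y : Set (EuclideanSpace ℝ (Fin d)), Y ⊆ insert x₀ (Set.range x) →
      ∃ f : Fin (2 ^ (d₀ + 1)) → Set (EuclideanSpace ℝ (Fin d)),
        Y ⊆ ⋃ i, f i ∧ ∀ i, EMetric.diam (f i) ≤ EMetric.diam Y / 2)
    (Nβ : ℕ)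
    (hNβ : Nβ = (Finset.univ.filter fun ij : Fin n × Fin n =>
        ij.1 < ij.2 ∧ dist (x ij.1) (x ij.2) ≤ β * r).card) :
    (1 / 4 : ℝ) * (((n : ℝ) ^ 2 / (2 * (Nβ : ℝ) + 2 * (n : ℝ))) ^
        ((1 : ℝ) / ((d₀ : ℝ) + 1)) - 1) * (β * r) ≤
      Finset.univ.sup' (Finset.univ_nonempty_iff.mpr ⟨⟨0, hn⟩⟩)
        (fun i => dist (x i) x₀) := by
  set M := Finset.univ.sup' (Finset.univ_nonempty_iff.mpr ⟨⟨0, hn⟩⟩) (fun i => dist (x i) x₀)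
  have hβr : 0 < β * r := mul_pos hβ hr
  have hdist : ∀ i, dist (x i) x₀ ≤ M := fun i => le_sup' (fun i => dist (x i) x₀) (mem_univ i)
  have hM : 0 ≤ M := dist_nonneg.trans (hdist ⟨0, hn⟩)
  have hball : insert x₀ (Set.range x) ⊆ closedBall x₀ M := by
    rintro _ (rfl | ⟨i, rfl⟩)
    exacts [mem_closedBall_self hM, hdist i]
  obtain ⟨k, hk, 𝒞, h𝒞card, h𝒞cov, h𝒞diam⟩ :=
    exists_finset_cover_ediam_le_of_subset_closedBall hdbl hM hβr hball
  have hcount : n ^ 2 ≤ (2 ^ k) ^ (d₀ + 1) * (2 * Nβ + 2 * n) := by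
    have h := card_sq_le_card_mul_card_near_pairs x 𝒞 hβr.le
      ((Set.subset_insert _ _).trans h𝒞cov) h𝒞diam
    rw [Fintype.card_fin, ← hNβ] at h
    rw [← pow_mul, mul_comm k, pow_mul]
    exact h.trans (Nat.mul_le_mul h𝒞card (by omega))
  have hroot : ((n : ℝ) ^ 2 / (2 * Nβ + 2 * n)) ^ ((1 : ℝ) / ((d₀ : ℝ) + 1)) ≤ 2 ^ k := by
    have hn' : (0 : ℝ) < n := by exact_mod_cast hn
    rw [one_div, Real.rpow_inv_le_iff_of_pos (by positivity) (by positivity) (by positivity),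
      div_le_iff₀ (by positivity)]
    exact_mod_cast hcount
  calc _ ≤ (1 / 4 : ℝ) * (2 ^ k - 1) * (β * r) := by gcongr
    _ ≤ M := by linarith
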